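/- arXiv:1902.01900 — 6 statements merged into one kernel-verified Lean document; each statement's English description precedes it below -/
import Mathlib

section
/- If φ is a normalized symmetric n-cochain (n ≥ 2) of a group G with coefficients in a G-module M, i.e. φ ∈ CS^n_N(G,M), then φ(g₁,…,gₙ) = 0 whenever g_{i+1} = g_i^{-1} for some 1 ≤ i ≤ n−1. -/
/-- If `φ ∈ CS^n_N(G,M)` (a normalized symmetric `n`-cochain, `n ≥ 2`),
then `φ(g₁,…,gₙ) = 0` whenever `g_{i+1} = g_i⁻¹` for some `1 ≤ i ≤ n-1`.
Cochains are maps `(Fin n → G) → M`; symmetry means invariance under the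
transpositions `τ₁, …, τₙ` of the `Σ_{n+1}`-action. -/
theorem stmt0 {G : Type*} [Group G] {M : Type*} [AddCommGroup M]
    [DistribMulAction G M] {n : ℕ} (hn : 2 ≤ n)
    (φ : (Fin n → G) → M)
    -- φ is normalized
    (hnorm : ∀ g : Fin n → G, (∃ j, g j = 1) → φ g = 0)
    -- invariance under τ_i for 1 < i < n (1-indexed)
    (hτmid : ∀ i : ℕ, (h1 : 1 < i) → (h2 : i < n) → ∀ g : Fin n → G,
      φ g = - φ (fun j => if (j : ℕ) = i - 2 then g j * g ⟨i - 1, by omega⟩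
        else if (j : ℕ) = i - 1 then (g ⟨i - 1, by omega⟩)⁻¹
        else if (j : ℕ) = i then g ⟨i - 1, by omega⟩ * g j
        else g j))
    -- invariance under τ_n
    (hτn : ∀ g : Fin n → G,
      φ g = - φ (fun j => if (j : ℕ) = n - 2 then g j * g ⟨n - 1, by omega⟩
        else if (j : ℕ) = n - 1 then (g ⟨n - 1, by omega⟩)⁻¹
        else g j))
    -- conclusion: φ vanishes when consecutive entries are inverse to each other
    (g : Fin n → G) (i : ℕ) (hi1 : 1 ≤ i) (hi2 : i ≤ n - 1)
    (hg : g ⟨i, by omega⟩ = (g ⟨i - 1, by omega⟩)⁻¹) :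
    φ g = 0 := by
  -- τ_{i+1} (τ_n if i + 1 = n) turns the entry at index i - 1 into g (i - 1) * g i = 1.
  have hprod : g ⟨i - 1, by omega⟩ * g ⟨i, by omega⟩ = 1 := by rw [hg, mul_inv_cancel]
  rcases (show i + 1 ≤ n by omega).eq_or_lt with hlast | hmid
  · rw [hτn g, hnorm _ ⟨⟨i - 1, by omega⟩, ?_⟩, neg_zero]
    simpa only [if_pos (show i - 1 = n - 2 by omega), show n - 1 = i by omega] using hprod
  · rw [hτmid (i + 1) (by omega) hmid g, hnorm _ ⟨⟨i - 1, by omega⟩, ?_⟩, neg_zero]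
    simpa only [if_pos (show i - 1 = i + 1 - 2 by omega), Nat.add_sub_cancel] using hprod
end

section
/- A normalized 3-cocycle φ ∈ C^3_N(G,M) is symmetric if and only if φ(x, x^{-1}, y) = 0 and φ(x, y, y^{-1}) = 0 for all x, y ∈ G. -/
/-!
Each of the three symmetry relations is one instance of the cocycle identity: taking
`(x, x⁻¹, xy, z)`, `(x, y, y⁻¹, yz)` and `(x, y, z, z⁻¹)` makes one term normalized away and,
once `φ(a, a⁻¹, b) = φ(a, b, b⁻¹) = 0`, two more vanish, leaving `τᵢ φ = φ`. Conversely,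
`τ₁ φ = φ` at `(x, x⁻¹, y)` and `τ₃ φ = φ` at `(x, y, y⁻¹)` reduce to these vanishing
conditions, because the other side has a trivial middle argument.
-/

namespace ThreeCochain

variable {G M : Type*} [Group G] [AddCommGroup M]

theorem apply_inv_right_eq_zero {φ : G → G → G → M} (h₂ : ∀ x z, φ x 1 z = 0)
    (hτ₃ : ∀ x y z, φ x y z = -φ x (y * z) z⁻¹) (x y : G) : φ x y y⁻¹ = 0 := by
  simpa [h₂] using hτ₃ x y y⁻¹

variable [DistribMulAction G M]

def IsCocycle (φ : G → G → G → M) : Prop :=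
  ∀ x y z w : G, x • φ y z w - φ (x * y) z w + φ x (y * z) w - φ x y (z * w) + φ x y z = 0

variable {φ : G → G → G → M}

theorem eq_neg_smul_of_isCocycle (hφ : IsCocycle φ) (h₁ : ∀ y z, φ 1 y z = 0)
    (hinv : ∀ x y, φ x x⁻¹ y = 0) (x y z : G) : φ x y z = -(x • φ x⁻¹ (x * y) z) := by
  have hc := hφ x x⁻¹ (x * y) z
  rw [mul_inv_cancel, h₁, inv_mul_cancel_left, hinv, hinv] at hc
  simp only [sub_zero, add_zero] at hc
  exact eq_neg_of_add_eq_zero_right hc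

theorem eq_neg_mul_inv_of_isCocycle (hφ : IsCocycle φ) (h₂ : ∀ x z, φ x 1 z = 0)
    (hinv : ∀ x y, φ x x⁻¹ y = 0) (hinv' : ∀ x y, φ x y y⁻¹ = 0) (x y z : G) :
    φ x y z = -φ (x * y) y⁻¹ (y * z) := by
  have hc := hφ x y y⁻¹ (y * z)
  rw [mul_inv_cancel, hinv, h₂, inv_mul_cancel_left, hinv'] at hc
  simp only [smul_zero, zero_sub, add_zero] at hc
  exact (sub_eq_zero.mp hc).symm

theorem eq_neg_inv_of_isCocycle (hφ : IsCocycle φ) (h₃ : ∀ x y, φ x y 1 = 0)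
    (hinv' : ∀ x y, φ x y y⁻¹ = 0) (x y z : G) : φ x y z = -φ x (y * z) z⁻¹ := by
  have hc := hφ x y z z⁻¹
  rw [mul_inv_cancel, hinv', hinv', h₃] at hc
  simp only [smul_zero, zero_add, sub_zero] at hc
  exact eq_neg_of_add_eq_zero_right hc

theorem apply_inv_left_eq_zero (h₂ : ∀ x z, φ x 1 z = 0)
    (hτ₁ : ∀ x y z, φ x y z = -(x • φ x⁻¹ (x * y) z)) (x y : G) : φ x x⁻¹ y = 0 := by
  simpa [h₂] using hτ₁ x x⁻¹ y

end ThreeCochain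

open ThreeCochain in
/-- A normalized 3-cocycle `φ` is symmetric (invariant under the
`Σ₄`-action given by `τ₁, τ₂, τ₃`) iff `φ(x,x⁻¹,y) = 0` and `φ(x,y,y⁻¹) = 0`
for all `x, y ∈ G`. -/
theorem stmt2 {G : Type*} [Group G] {M : Type*} [AddCommGroup M]
    [DistribMulAction G M] (φ : G → G → G → M)
    -- normalized
    (hnorm : ∀ x y z : G, (x = 1 ∨ y = 1 ∨ z = 1) → φ x y z = 0)
    -- cocycle
    (hcocycle : ∀ x y z w : G,
      x • φ y z w - φ (x * y) z w + φ x (y * z) w - φ x y (z * w) + φ x y z = 0) :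
    ((∀ x y z : G, φ x y z = - (x • φ x⁻¹ (x * y) z))
      ∧ (∀ x y z : G, φ x y z = - φ (x * y) y⁻¹ (y * z))
      ∧ (∀ x y z : G, φ x y z = - φ x (y * z) z⁻¹))
    ↔ (∀ x y : G, φ x x⁻¹ y = 0 ∧ φ x y y⁻¹ = 0) := by
  have h₁ : ∀ y z, φ 1 y z = 0 := fun y z => hnorm 1 y z (.inl rfl)
  have h₂ : ∀ x z, φ x 1 z = 0 := fun x z => hnorm x 1 z (.inr (.inl rfl))
  have h₃ : ∀ x y, φ x y 1 = 0 := fun x y => hnorm x y 1 (.inr (.inr rfl))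
  constructor
  · rintro ⟨hτ₁, -, hτ₃⟩ x y
    exact ⟨apply_inv_left_eq_zero h₂ hτ₁ x y, apply_inv_right_eq_zero h₂ hτ₃ x y⟩
  · intro h
    have hinv : ∀ x y, φ x x⁻¹ y = 0 := fun x y => (h x y).1
    have hinv' : ∀ x y, φ x y y⁻¹ = 0 := fun x y => (h x y).2
    exact ⟨eq_neg_smul_of_isCocycle hcocycle h₁ hinv,
      eq_neg_mul_inv_of_isCocycle hcocycle h₂ hinv hinv',
      eq_neg_inv_of_isCocycle hcocycle h₃ hinv'⟩
end

section
/- Let φ be a normalized symmetric 3-cocycle which is a coboundary: φ(x,y,z) = x·g(y,z) − g(xy,z) + g(x,yz) − g(x,y) for some normalized 2-cochain g. Then g is symmetric if and only if g(x, x^{-1}) = 0 for all x ∈ G. -/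
/-!
Evaluating `φ = δg` at `(x, x⁻¹, xy)` and at `(x, y, y⁻¹)` gives
`g(x,y) = -x·g(x⁻¹,xy) + g(x,x⁻¹) + φ(x,x⁻¹,xy)` and
`g(x,y) = -g(xy,y⁻¹) + x·g(y,y⁻¹) - φ(x,y,y⁻¹)`.
Symmetry and normalization of `φ` kill both `φ`-terms, so the two symmetry identities of `g`
hold exactly when the terms `g(x,x⁻¹)` vanish.
-/

theorem sym3_apply_inv_left_eq_zero {G M : Type*} [Group G] [AddGroup M]
    [DistribMulAction G M] {φ : G → G → G → M} (hφ : ∀ x z : G, φ x 1 z = 0)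
    (hsym1 : ∀ x y z : G, φ x y z = - (x • φ x⁻¹ (x * y) z)) (x y : G) :
    φ x x⁻¹ y = 0 := by
  rw [hsym1, mul_inv_cancel, hφ, smul_zero, neg_zero]

theorem sym3_apply_inv_right_eq_zero {G M : Type*} [Group G] [AddGroup M]
    {φ : G → G → G → M} (hφ : ∀ x z : G, φ x 1 z = 0)
    (hsym3 : ∀ x y z : G, φ x y z = - φ x (y * z) z⁻¹) (x y : G) :
    φ x y y⁻¹ = 0 := by
  rw [hsym3, mul_inv_cancel, hφ, neg_zero]

theorem eq_of_coboundary_apply_inv_left {G M : Type*} [Group G] [AddCommGroup M] [SMul G M]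
    {φ : G → G → G → M} {g : G → G → M} (hg : ∀ z : G, g 1 z = 0)
    (hcob : ∀ x y z : G, φ x y z = x • g y z - g (x * y) z + g x (y * z) - g x y) (x y : G) :
    g x y = -(x • g x⁻¹ (x * y)) + g x x⁻¹ + φ x x⁻¹ (x * y) := by
  rw [hcob, mul_inv_cancel, inv_mul_cancel_left, hg]
  abel

theorem eq_of_coboundary_apply_inv_right {G M : Type*} [Group G] [AddCommGroup M] [SMul G M]
    {φ : G → G → G → M} {g : G → G → M} (hg : ∀ x : G, g x 1 = 0)
    (hcob : ∀ x y z : G, φ x y z = x • g y z - g (x * y) z + g x (y * z) - g x y) (x y : G) :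
    g x y = -g (x * y) y⁻¹ + x • g y y⁻¹ - φ x y y⁻¹ := by
  rw [hcob, mul_inv_cancel, hg]
  abel

theorem stmt3_general {G : Type*} [Group G] {M : Type*} [AddCommGroup M]
    [DistribMulAction G M] (φ : G → G → G → M) (g : G → G → M)
    -- φ is normalized
    (hφnorm : ∀ x y z : G, (x = 1 ∨ y = 1 ∨ z = 1) → φ x y z = 0)
    -- φ is symmetric (invariant under the Σ₄-action)
    (hsym1 : ∀ x y z : G, φ x y z = - (x • φ x⁻¹ (x * y) z))
    (hsym3 : ∀ x y z : G, φ x y z = - φ x (y * z) z⁻¹)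
    -- g is a normalized 2-cochain
    (hgnorm : ∀ x : G, g 1 x = 0 ∧ g x 1 = 0)
    -- φ is the coboundary of g
    (hcob : ∀ x y z : G, φ x y z = x • g y z - g (x * y) z + g x (y * z) - g x y) :
    -- g symmetric ↔ g(x,x⁻¹) = 0
    ((∀ x y : G, g x y = - (x • g x⁻¹ (x * y)) ∧ g x y = - g (x * y) y⁻¹))
    ↔ (∀ x : G, g x x⁻¹ = 0) := by
  have hφ : ∀ x z : G, φ x 1 z = 0 := fun x z => hφnorm x 1 z (Or.inr (Or.inl rfl))
  constructor
  · intro hsym x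
    rw [(hsym x x⁻¹).2, mul_inv_cancel, (hgnorm _).1, neg_zero]
  · intro hinv x y
    constructor
    · rw [eq_of_coboundary_apply_inv_left (fun z => (hgnorm z).1) hcob,
        sym3_apply_inv_left_eq_zero hφ hsym1, hinv, add_zero, add_zero]
    · rw [eq_of_coboundary_apply_inv_right (fun z => (hgnorm z).2) hcob,
        sym3_apply_inv_right_eq_zero hφ hsym3, hinv, smul_zero, add_zero, sub_zero]

/-- If `φ` is a normalized symmetric 3-cocycle which is the
coboundary of a normalized 2-cochain `g`, then `g` is symmetric iff
`g(x,x⁻¹) = 0` for all `x`. -/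
theorem stmt3 {G : Type*} [Group G] {M : Type*} [AddCommGroup M]
    [DistribMulAction G M] (φ : G → G → G → M) (g : G → G → M)
    -- φ is normalized
    (hφnorm : ∀ x y z : G, (x = 1 ∨ y = 1 ∨ z = 1) → φ x y z = 0)
    -- φ is a cocycle
    (hcocycle : ∀ x y z w : G,
      x • φ y z w - φ (x * y) z w + φ x (y * z) w - φ x y (z * w) + φ x y z = 0)
    -- φ is symmetric (invariant under the Σ₄-action)
    (hsym1 : ∀ x y z : G, φ x y z = - (x • φ x⁻¹ (x * y) z))
    (hsym2 : ∀ x y z : G, φ x y z = - φ (x * y) y⁻¹ (y * z))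
    (hsym3 : ∀ x y z : G, φ x y z = - φ x (y * z) z⁻¹)
    -- g is a normalized 2-cochain
    (hgnorm : ∀ x : G, g 1 x = 0 ∧ g x 1 = 0)
    -- φ is the coboundary of g
    (hcob : ∀ x y z : G, φ x y z = x • g y z - g (x * y) z + g x (y * z) - g x y) :
    -- g symmetric ↔ g(x,x⁻¹) = 0
    ((∀ x y : G, g x y = - (x • g x⁻¹ (x * y)) ∧ g x y = - g (x * y) y⁻¹))
    ↔ (∀ x : G, g x x⁻¹ = 0) :=
  stmt3_general φ g hφnorm hsym1 hsym3 hgnorm hcob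
end

section
/- Given an s-section (s, σ) of a crossed extension 0 → M → T →∂ R →p G → 0, the function f(x,y,z) = {}^{s(x)}σ(y,z) · σ(x,yz) · σ(xy,z)^{-1} · σ(x,y)^{-1} takes values in M = ker∂ and is a 3-cocycle of G with coefficients in M. -/
/-!
Elements of `ker ∂` are central, since `{}^{∂t}u = t u t⁻¹` while `∂t = 1` acts trivially. So `f`
can be moved freely inside products, and `{}^{s x}σ(y,z) · σ(x,yz) = f(x,y,z) · σ(x,y) · σ(xy,z)`
says that `f` measures the failure of `σ` to be associative. Expanding
`{}^{s x}{}^{s y}σ(z,w) · {}^{s x}σ(y,zw) · σ(x,yzw)` into `f · σ(x,y) σ(xy,z) σ(xyz,w)` in two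
ways — once through `{}^{s x}(…)`, once through `{}^{s x}{}^{s y} = {}^{∂σ(x,y)}{}^{s(xy)}` — and
cancelling the common `σ`-factor gives the cocycle identity.
-/

section CrossedExtension

variable {T R G : Type*} [Group T] [Group R] [Group G] [MulDistribMulAction R T]

structure IsCrossedModule (δ : T →* R) : Prop where
  map_smul : ∀ (r : R) (t : T), δ (r • t) = r * δ t * r⁻¹
  map_smul_eq_conj : ∀ t u : T, δ t • u = t * u * t⁻¹

def sectionCocycle (s : G → R) (σ : G → G → T) (x y z : G) : T :=
  s x • σ y z * σ x (y * z) * (σ (x * y) z)⁻¹ * (σ x y)⁻¹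

theorem smul_mul_eq_sectionCocycle_mul (s : G → R) (σ : G → G → T) (x y z : G) :
    s x • σ y z * σ x (y * z) = sectionCocycle s σ x y z * σ x y * σ (x * y) z := by
  simp only [sectionCocycle]
  group

theorem mul_inv_mul_inv_mul_eq_one_of_commute {a b c d e : T}
    (hb : ∀ u, Commute b u) (hd : ∀ u, Commute d u) (h : a * c * e = d * b) :
    a * b⁻¹ * c * d⁻¹ * e = 1 := by
  have hb' : ∀ u, Commute b⁻¹ u := fun u => (hb u).inv_left
  have hd' : ∀ u, Commute d⁻¹ u := fun u => (hd u).inv_left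
  calc a * b⁻¹ * c * d⁻¹ * e = a * c * (b⁻¹ * (d⁻¹ * e)) := by
        rw [mul_assoc a, (hb' c).eq]; group
    _ = a * c * e * (d * b)⁻¹ := by
        rw [(hd' e).eq, ← mul_assoc b⁻¹, (hb' e).eq]; group
    _ = 1 := by rw [h, mul_inv_cancel]

namespace IsCrossedModule

variable {δ : T →* R} {s : G → R} {σ : G → G → T}

theorem commute_of_mem_ker (hδ : IsCrossedModule δ) {t : T} (ht : t ∈ δ.ker) (u : T) :
    Commute t u := by
  have h := hδ.map_smul_eq_conj t u
  rw [MonoidHom.mem_ker.mp ht, one_smul] at h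
  exact mul_inv_eq_iff_eq_mul.mp h.symm

theorem sectionCocycle_mem_ker (hδ : IsCrossedModule δ)
    (hσ : ∀ x y, s x * s y = δ (σ x y) * s (x * y)) (x y z : G) :
    sectionCocycle s σ x y z ∈ δ.ker := by
  have hδσ : ∀ x y, δ (σ x y) = s x * s y * (s (x * y))⁻¹ := fun x y =>
    eq_mul_inv_of_mul_eq (hσ x y).symm
  rw [MonoidHom.mem_ker, sectionCocycle]
  simp only [map_mul, map_inv, hδ.map_smul, hδσ, mul_assoc x y z]
  group

theorem smul_smul_eq_conj (hδ : IsCrossedModule δ)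
    (hσ : ∀ x y, s x * s y = δ (σ x y) * s (x * y)) (x y : G) (t : T) :
    s x • s y • t = σ x y * s (x * y) • t * (σ x y)⁻¹ := by
  rw [← mul_smul, hσ, mul_smul, hδ.map_smul_eq_conj]

theorem smul_smul_mul_smul_mul_eq_smul_sectionCocycle (hδ : IsCrossedModule δ)
    (hσ : ∀ x y, s x * s y = δ (σ x y) * s (x * y)) (x y z w : G) :
    s x • s y • σ z w * s x • σ y (z * w) * σ x (y * z * w) =
      s x • sectionCocycle s σ y z w * sectionCocycle s σ x (y * z) w * sectionCocycle s σ x y z *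
        (σ x y * σ (x * y) z * σ (x * y * z) w) := by
  have hF := smul_mul_eq_sectionCocycle_mul s σ
  have hc := hδ.commute_of_mem_ker (sectionCocycle_mem_ker hδ hσ x (y * z) w)
  set F := sectionCocycle s σ
  calc s x • s y • σ z w * s x • σ y (z * w) * σ x (y * z * w)
      = s x • (s y • σ z w * σ y (z * w)) * σ x (y * z * w) := by rw [smul_mul']
    _ = s x • F y z w * s x • σ y z * (s x • σ (y * z) w * σ x (y * z * w)) := by
      rw [hF, smul_mul', smul_mul']; simp only [mul_assoc (G := T)]
    _ = s x • F y z w * s x • σ y z * (F x (y * z) w * σ x (y * z) * σ (x * (y * z)) w) := by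
      rw [hF]
    _ = s x • F y z w * F x (y * z) w * (s x • σ y z * σ x (y * z)) * σ (x * (y * z)) w := by
      simp only [mul_assoc (G := T)]; rw [(hc _).symm.left_comm]
    _ = s x • F y z w * F x (y * z) w * F x y z * (σ x y * σ (x * y) z * σ (x * y * z) w) := by
      rw [hF, ← mul_assoc x y z]; group

theorem smul_smul_mul_smul_mul_eq_sectionCocycle (hδ : IsCrossedModule δ)
    (hσ : ∀ x y, s x * s y = δ (σ x y) * s (x * y)) (x y z w : G) :
    s x • s y • σ z w * s x • σ y (z * w) * σ x (y * z * w) =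
      sectionCocycle s σ x y (z * w) * sectionCocycle s σ (x * y) z w *
        (σ x y * σ (x * y) z * σ (x * y * z) w) := by
  have hF := smul_mul_eq_sectionCocycle_mul s σ
  have hc₁ := hδ.commute_of_mem_ker (sectionCocycle_mem_ker hδ hσ x y (z * w))
  have hc₂ := hδ.commute_of_mem_ker (sectionCocycle_mem_ker hδ hσ (x * y) z w)
  set F := sectionCocycle s σ
  calc s x • s y • σ z w * s x • σ y (z * w) * σ x (y * z * w)
      = σ x y * s (x * y) • σ z w * (σ x y)⁻¹ * (F x y (z * w) * σ x y * σ (x * y) (z * w)) := by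
        rw [hδ.smul_smul_eq_conj hσ, mul_assoc _ (s x • σ y (z * w)), mul_assoc y z w, hF]
    _ = F x y (z * w) * σ x y * (s (x * y) • σ z w * σ (x * y) (z * w)) := by
      simp only [mul_assoc (G := T)]
      rw [← (hc₁ _).left_comm, ← (hc₁ _).left_comm, ← (hc₁ _).left_comm]
      group
    _ = F x y (z * w) * σ x y * (F (x * y) z w * σ (x * y) z * σ (x * y * z) w) := by
      rw [hF]
    _ = F x y (z * w) * F (x * y) z w * (σ x y * σ (x * y) z * σ (x * y * z) w) := by
      simp only [mul_assoc (G := T)]; rw [(hc₂ _).symm.left_comm]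

theorem sectionCocycle_smul_mul_mul_eq (hδ : IsCrossedModule δ)
    (hσ : ∀ x y, s x * s y = δ (σ x y) * s (x * y)) (x y z w : G) :
    s x • sectionCocycle s σ y z w * sectionCocycle s σ x (y * z) w * sectionCocycle s σ x y z =
      sectionCocycle s σ x y (z * w) * sectionCocycle s σ (x * y) z w :=
  mul_right_cancel <| (smul_smul_mul_smul_mul_eq_smul_sectionCocycle hδ hσ x y z w).symm.trans
    (smul_smul_mul_smul_mul_eq_sectionCocycle hδ hσ x y z w)

end IsCrossedModule

end CrossedExtension

theorem stmt6_general {T R G : Type*} [Group T] [Group R] [Group G]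
    [MulDistribMulAction R T] (δ : T →* R)
    -- crossed module axioms
    (hpeif1 : ∀ (r : R) (t : T), δ (r • t) = r * δ t * r⁻¹)
    (hpeif2 : ∀ t u : T, (δ t) • u = t * u * t⁻¹)
    -- s-section
    (s : G → R) (σ : G → G → T)
    (hσ : ∀ x y, s x * s y = δ (σ x y) * s (x * y))
    -- the associated function f
    (f : G → G → G → T)
    (hf : ∀ x y z, f x y z =
      (s x • σ y z) * σ x (y * z) * (σ (x * y) z)⁻¹ * (σ x y)⁻¹) :
    (∀ x y z, f x y z ∈ δ.ker) ∧
    (∀ x y z w : G,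
      (s x • f y z w) * (f (x * y) z w)⁻¹ * f x (y * z) w *
        (f x y (z * w))⁻¹ * f x y z = 1) := by
  have hδ : IsCrossedModule δ := ⟨hpeif1, hpeif2⟩
  obtain rfl : f = sectionCocycle s σ := funext fun x => funext fun y => funext (hf x y)
  have hcentral := fun x y z => hδ.commute_of_mem_ker (hδ.sectionCocycle_mem_ker hσ x y z)
  refine ⟨hδ.sectionCocycle_mem_ker hσ, fun x y z w => ?_⟩
  exact mul_inv_mul_inv_mul_eq_one_of_commute (hcentral _ _ _) (hcentral _ _ _)
    (hδ.sectionCocycle_smul_mul_mul_eq hσ x y z w)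

/-- Given an s-section `(s,σ)` of a crossed extension
`0 → M → T →∂ R →p G → 0`, the function
`f(x,y,z) = {}^{s x}σ(y,z)·σ(x,yz)·σ(xy,z)⁻¹·σ(x,y)⁻¹` takes values in
`M = ker ∂` and is a 3-cocycle of `G` with coefficients in `M` (the
`G`-action on `M` is induced via the section: `x • m = {}^{s x} m`;
the cocycle identity is written multiplicatively in the central
subgroup `ker ∂`). -/
theorem stmt6 {T R G : Type*} [Group T] [Group R] [Group G]
    [MulDistribMulAction R T] (δ : T →* R)
    -- crossed module axioms
    (hpeif1 : ∀ (r : R) (t : T), δ (r • t) = r * δ t * r⁻¹)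
    (hpeif2 : ∀ t u : T, (δ t) • u = t * u * t⁻¹)
    -- crossed extension: p surjective with ker p = im δ
    (p : R →* G) (hp : Function.Surjective p)
    (hexact : ∀ r : R, p r = 1 ↔ r ∈ δ.range)
    -- s-section
    (s : G → R) (σ : G → G → T)
    (hs : ∀ x, p (s x) = x)
    (hσ : ∀ x y, s x * s y = δ (σ x y) * s (x * y))
    -- the associated function f
    (f : G → G → G → T)
    (hf : ∀ x y z, f x y z =
      (s x • σ y z) * σ x (y * z) * (σ (x * y) z)⁻¹ * (σ x y)⁻¹) :
    (∀ x y z, f x y z ∈ δ.ker) ∧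
    (∀ x y z w : G,
      (s x • f y z w) * (f (x * y) z w)⁻¹ * f x (y * z) w *
        (f x y (z * w))⁻¹ * f x y z = 1) :=
  stmt6_general δ hpeif1 hpeif2 s σ hσ f hf
end

section
/- If G is a group with no elements of order two, then every crossed extension 0 → M → T →∂ R →p G → 0 admits a weakly symmetric s-section, i.e. a normalized s-section (s, σ) with s(x^{-1}) = s(x)^{-1} and σ(x, x^{-1}) = 1 for all x ∈ G. -/
/-! Well-order `G`; lift each `x` with `x < x⁻¹` arbitrarily and send `x⁻¹` to the inverse of that
lift. Without elements of order two, `1` is the only `x` with `x = x⁻¹`, so this defines a section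
`s` of `p` with `s 1 = 1` and `s x⁻¹ = (s x)⁻¹`. Exactness then lets us write
`s x * s y * (s (x * y))⁻¹` as `δ (σ x y)`, choosing `σ x y = 1` whenever `s x * s y = s (x * y)`,
which makes `σ 1 x`, `σ x 1` and `σ x x⁻¹` trivial. -/

theorem MonoidHom.exists_section_map_inv {R G : Type*} [Group R] [Group G] (p : R →* G)
    (hp : Function.Surjective p) (hG : ∀ x : G, x ^ 2 = 1 → x = 1) :
    ∃ s : G → R, (∀ x, p (s x) = x) ∧ s 1 = 1 ∧ ∀ x, s x⁻¹ = (s x)⁻¹ := by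
  classical
  let _ : LinearOrder G := WellOrderingRel.isWellOrder.linearOrder
  let s₀ := Function.surjInv hp
  let s : G → R := fun x => if x < x⁻¹ then s₀ x else if x⁻¹ < x then (s₀ x⁻¹)⁻¹ else 1
  refine ⟨s, fun x => ?_, by simp [s], fun x => ?_⟩
  · rcases lt_trichotomy x x⁻¹ with h | h | h
    · simp [s, h, s₀, Function.surjInv_eq hp]
    · have hx : x = 1 := hG x (by rw [pow_two, ← mul_inv_cancel x, ← h])
      simp [s, hx]
    · simp [s, h, h.not_gt, s₀, Function.surjInv_eq hp]
  · rcases lt_trichotomy x x⁻¹ with h | h | h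
    · simp [s, h, h.not_gt]
    · simp [s, ← h]
    · simp [s, h, h.not_gt]

theorem exists_factor_set_of_ker_le_range {T R G : Type*} [Group T] [Group R] [Group G]
    (δ : T →* R) (p : R →* G) (hker : p.ker ≤ δ.range) (s : G → R) (hs : ∀ x, p (s x) = x) :
    ∃ σ : G → G → T, (∀ x y, s x * s y = δ (σ x y) * s (x * y)) ∧
      ∀ x y, s x * s y = s (x * y) → σ x y = 1 := by
  classical
  have h : ∀ x y, ∃ t : T, δ t = s x * s y * (s (x * y))⁻¹ ∧ (s x * s y = s (x * y) → t = 1) := by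
    intro x y
    by_cases hxy : s x * s y = s (x * y)
    · exact ⟨1, by simp [hxy], fun _ => rfl⟩
    · have hmem : s x * s y * (s (x * y))⁻¹ ∈ p.ker := by simp [MonoidHom.mem_ker, hs]
      obtain ⟨t, ht⟩ := hker hmem
      exact ⟨t, ht, fun h => absurd h hxy⟩
  choose σ hδσ hσ using h
  exact ⟨σ, fun x y => by rw [hδσ, inv_mul_cancel_right], hσ⟩

theorem stmt9_general {T R G : Type*} [Group T] [Group R] [Group G]
    (δ : T →* R)
    (p : R →* G) (hp : Function.Surjective p)
    (hexact : ∀ r : R, p r = 1 ↔ r ∈ δ.range)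
    -- G has no elements of order two
    (hG : ∀ x : G, x ^ 2 = 1 → x = 1) :
    ∃ (s : G → R) (σ : G → G → T),
      (∀ x, p (s x) = x) ∧
      (∀ x y, s x * s y = δ (σ x y) * s (x * y)) ∧
      s 1 = 1 ∧ (∀ x, σ 1 x = 1 ∧ σ x 1 = 1) ∧
      (∀ x, s x⁻¹ = (s x)⁻¹) ∧ (∀ x, σ x x⁻¹ = 1) := by
  obtain ⟨s, hs, hs1, hsinv⟩ := p.exists_section_map_inv hp hG
  obtain ⟨σ, hσ, hσ1⟩ :=
    exists_factor_set_of_ker_le_range δ p (fun r hr => (hexact r).mp hr) s hs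
  refine ⟨s, σ, hs, hσ, hs1, fun x => ⟨hσ1 1 x ?_, hσ1 x 1 ?_⟩, hsinv, fun x => hσ1 x x⁻¹ ?_⟩
  · simp [hs1]
  · simp [hs1]
  · simp [hs1, hsinv]

/-- If `G` has no elements of order two, then every crossed
extension `0 → M → T →∂ R →p G → 0` admits a weakly symmetric s-section:
a normalized s-section `(s,σ)` with `s(x⁻¹) = s(x)⁻¹` and `σ(x,x⁻¹) = 1`. -/
theorem stmt9 {T R G : Type*} [Group T] [Group R] [Group G]
    [MulDistribMulAction R T] (δ : T →* R)
    (hpeif1 : ∀ (r : R) (t : T), δ (r • t) = r * δ t * r⁻¹)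
    (hpeif2 : ∀ t u : T, (δ t) • u = t * u * t⁻¹)
    (p : R →* G) (hp : Function.Surjective p)
    (hexact : ∀ r : R, p r = 1 ↔ r ∈ δ.range)
    -- G has no elements of order two
    (hG : ∀ x : G, x ^ 2 = 1 → x = 1) :
    ∃ (s : G → R) (σ : G → G → T),
      (∀ x, p (s x) = x) ∧
      (∀ x y, s x * s y = δ (σ x y) * s (x * y)) ∧
      s 1 = 1 ∧ (∀ x, σ 1 x = 1 ∧ σ x 1 = 1) ∧
      (∀ x, s x⁻¹ = (s x)⁻¹) ∧ (∀ x, σ x x⁻¹ = 1) :=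
  stmt9_general δ p hp hexact hG
end

section
/- Let (s,σ) be a weakly symmetric s-section of a crossed extension of G by M. Then the associated 3-cocycle f(x,y,z) = {}^{s(x)}σ(y,z)·σ(x,yz)·σ(xy,z)^{-1}·σ(x,y)^{-1} satisfies f(x,x^{-1},y) = 0 and f(x,y,y^{-1}) = 0 for all x,y (hence is a normalized symmetric 3-cocycle) if and only if (s,σ) is a symmetric s-section. -/
/-! Under weak symmetry `σ(x,x⁻¹) = 1` and normalization, the two degenerate values of the
cocycle collapse to two-term products: `f(x,x⁻¹,x y)` is `ˢ⁽ˣ⁾σ(x⁻¹,x y) · σ(x,y)` and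
`f(x,y,y⁻¹)` is the inverse of `σ(x,y) · σ(x y,y⁻¹)`. Each is trivial exactly when the
corresponding symmetry identity holds, since `a b = 1 ↔ b a = 1` in a group. -/

namespace CrossedExtension

variable {T R G : Type*} [Group T] [Group R] [Group G] [MulDistribMulAction R T]

def cocycle (s : G → R) (σ : G → G → T) (x y z : G) : T :=
  (s x • σ y z) * σ x (y * z) * (σ (x * y) z)⁻¹ * (σ x y)⁻¹

variable (s : G → R) (σ : G → G → T)

lemma cocycle_inv_left {x y : G} (h1 : σ 1 y = 1) (hx : σ x x⁻¹ = 1) :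
    cocycle s σ x x⁻¹ y = (s x • σ x⁻¹ y) * σ x (x⁻¹ * y) := by
  simp only [cocycle, mul_inv_cancel, h1, hx, inv_one, mul_one]

lemma cocycle_inv_right {x y : G} (h1 : σ x 1 = 1) (hy : σ y y⁻¹ = 1) :
    cocycle s σ x y y⁻¹ = (σ x y * σ (x * y) y⁻¹)⁻¹ := by
  simp only [cocycle, mul_inv_cancel, h1, hy, smul_one, one_mul, mul_inv_rev]

lemma forall_cocycle_inv_left_eq_one_iff (h1 : ∀ y, σ 1 y = 1) {x : G} (hx : σ x x⁻¹ = 1) :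
    (∀ y, cocycle s σ x x⁻¹ y = 1) ↔ ∀ y, σ x y * (s x • σ x⁻¹ (x * y)) = 1 := by
  refine ((Equiv.mulLeft x).forall_congr fun y ↦ ?_).symm
  rw [Equiv.coe_mulLeft, cocycle_inv_left s σ (h1 _) hx, inv_mul_cancel_left, mul_eq_one_comm]

lemma cocycle_inv_right_eq_one_iff {x y : G} (h1 : σ x 1 = 1) (hy : σ y y⁻¹ = 1) :
    cocycle s σ x y y⁻¹ = 1 ↔ σ x y * σ (x * y) y⁻¹ = 1 := by
  rw [cocycle_inv_right s σ h1 hy, inv_eq_one]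

end CrossedExtension

open CrossedExtension in
theorem stmt16_general {T R G : Type*} [Group T] [Group R] [Group G]
    [MulDistribMulAction R T]
    (s : G → R) (σ : G → G → T)
    (hσ1 : ∀ x, σ 1 x = 1 ∧ σ x 1 = 1)
    -- weakly symmetric
    (hσinv : ∀ x, σ x x⁻¹ = 1)
    (f : G → G → G → T)
    (hf : ∀ x y z, f x y z =
      (s x • σ y z) * σ x (y * z) * (σ (x * y) z)⁻¹ * (σ x y)⁻¹) :
    (∀ x y : G, f x x⁻¹ y = 1 ∧ f x y y⁻¹ = 1)
    ↔ ((∀ x y : G, σ x y * (s x • σ x⁻¹ (x * y)) = 1) ∧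
      (∀ x y : G, σ x y * σ (x * y) y⁻¹ = 1)) := by
  obtain rfl : f = cocycle s σ := funext fun x ↦ funext fun y ↦ funext (hf x y)
  simp only [forall_and]
  refine and_congr (forall_congr' fun x ↦ ?_) (forall₂_congr fun x y ↦ ?_)
  · exact forall_cocycle_inv_left_eq_one_iff s σ (fun y ↦ (hσ1 y).1) (hσinv x)
  · exact cocycle_inv_right_eq_one_iff s σ (hσ1 x).2 (hσinv y)

/-- For a weakly symmetric s-section `(s,σ)` of a crossed
extension, the associated 3-cocycle `f` satisfies `f(x,x⁻¹,y) = 1` and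
`f(x,y,y⁻¹) = 1` for all `x,y` (multiplicative notation in `M = ker ∂`)
iff `(s,σ)` is a symmetric s-section. -/
theorem stmt16 {T R G : Type*} [Group T] [Group R] [Group G]
    [MulDistribMulAction R T] (δ : T →* R)
    (hpeif1 : ∀ (r : R) (t : T), δ (r • t) = r * δ t * r⁻¹)
    (hpeif2 : ∀ t u : T, (δ t) • u = t * u * t⁻¹)
    (p : R →* G) (hp : Function.Surjective p)
    (hexact : ∀ r : R, p r = 1 ↔ r ∈ δ.range)
    (s : G → R) (σ : G → G → T)
    (hs : ∀ x, p (s x) = x)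
    (hσ : ∀ x y, s x * s y = δ (σ x y) * s (x * y))
    (hs1 : s 1 = 1) (hσ1 : ∀ x, σ 1 x = 1 ∧ σ x 1 = 1)
    -- weakly symmetric
    (hsinv : ∀ x, s x⁻¹ = (s x)⁻¹) (hσinv : ∀ x, σ x x⁻¹ = 1)
    (f : G → G → G → T)
    (hf : ∀ x y z, f x y z =
      (s x • σ y z) * σ x (y * z) * (σ (x * y) z)⁻¹ * (σ x y)⁻¹) :
    (∀ x y : G, f x x⁻¹ y = 1 ∧ f x y y⁻¹ = 1)
    ↔ ((∀ x y : G, σ x y * (s x • σ x⁻¹ (x * y)) = 1) ∧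
      (∀ x y : G, σ x y * σ (x * y) y⁻¹ = 1)) :=
  stmt16_general s σ hσ1 hσinv f hf
end
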